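/- arXiv:2511.12146 — 2 statements merged into one kernel-verified Lean document; each statement's English description precedes it below -/
import Mathlib

section
/- Let ν be a Borel probability measure on (0,∞) whose moments are given by the Gamma-ratio formula ∫_0^∞ τ^k dν(τ) = (1/K) · ∏_{i=1}^m Γ(b_i + β_i(k+1)) / ∏_{j=1}^p Γ(a_j + α_j(k+1)) for all k ∈ ℕ, where β_i > 0, b_i + β_i > 0, α_j > 0, a_j + α_j > 0, K = ∏_{i=1}^m Γ(b_i + β_i) / ∏_{j=1}^p Γ(a_j + α_j), and a* := ∑_{i=1}^m β_i − ∑_{j=1}^p α_j ∈ (0,1). Then for every s ≥ 0, ∫_0^∞ e^{−sτ} dν(τ) = (1/K) · ∑_{k=0}^∞ (∏_{i=1}^m Γ(b_i + β_i + β_i k) / ∏_{j=1}^p Γ(a_j + α_j + α_j k)) (−s)^k / k!; i.e., the Laplace transform of ν equals (1/K) times the generalized Wright function with parameters (b_i + β_i, β_i)_{1,m}, (a_j + α_j, α_j)_{1,p} evaluated at −s. -/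
/-!
Expand `exp (-s τ)` in its power series and integrate term by term. Since `ν` lives on
`(0, ∞)`, the integrals of the absolute values of the terms are `|s| ^ k / k! * ∫ τ ^ k ∂ν`,
i.e. `1 / K` times the terms of the Wright series at `|s|`, so dominated convergence applies
once that series converges. Convergence follows from the ratio test: log-convexity of `Γ`
squeezes `Γ (x + c) / Γ x` between `(x - 1) ^ c` and `(x + c) ^ c`, so the ratio of
consecutive terms is `O(k ^ (a* - 1))`, which tends to `0` because `a* < 1`.
-/

open MeasureTheory Real Set Filter Topology Finset
open scoped Nat

namespace Real

theorem Gamma_add_le_Gamma_mul_rpow {x c : ℝ} (hx : 0 < x) (hc : 0 ≤ c) :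
    Gamma (x + c) ≤ Gamma x * (x + c) ^ c := by
  rcases hc.eq_or_lt with rfl | hc
  · simp
  have hxc : 0 < x + c := by linarith
  have hslope := convexOn_log_Gamma.slope_mono_adjacent (mem_Ioi.2 hx)
    (mem_Ioi.2 (by linarith : 0 < x + c + 1)) (by linarith : x < x + c) (lt_add_one (x + c))
  simp only [Function.comp_apply, Gamma_add_one hxc.ne',
    log_mul hxc.ne' (Gamma_pos_of_pos hxc).ne', add_sub_cancel_left, add_sub_cancel_right,
    div_one, div_le_iff₀ hc] at hslope
  rw [← log_le_log_iff (Gamma_pos_of_pos hxc) (by positivity),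
    log_mul (Gamma_pos_of_pos hx).ne' (by positivity), log_rpow hxc]
  linarith

theorem Gamma_mul_rpow_le_Gamma_add {x c : ℝ} (hx : 1 < x) (hc : 0 ≤ c) :
    Gamma x * (x - 1) ^ c ≤ Gamma (x + c) := by
  rcases hc.eq_or_lt with rfl | hc
  · simp
  have hx1 : 0 < x - 1 := by linarith
  have hslope := convexOn_log_Gamma.slope_mono_adjacent (mem_Ioi.2 hx1)
    (mem_Ioi.2 (by linarith : 0 < x + c)) (sub_one_lt x) (by linarith : x < x + c)
  have hGx : Gamma x = (x - 1) * Gamma (x - 1) := by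
    rw [← Gamma_add_one hx1.ne', sub_add_cancel]
  simp only [Function.comp_apply, sub_sub_cancel, add_sub_cancel_left, div_one,
    le_div_iff₀ hc] at hslope
  rw [hGx, log_mul hx1.ne' (Gamma_pos_of_pos hx1).ne'] at hslope
  rw [← log_le_log_iff (by positivity) (Gamma_pos_of_pos (by linarith)), hGx,
    log_mul (by positivity) (by positivity), log_mul hx1.ne' (Gamma_pos_of_pos hx1).ne',
    log_rpow hx1]
  linarith

end Real

theorem tendsto_prod_rpow_div_rpow_sum {ι : Type*} [Fintype ι] {c : ι → ℝ} (hc : ∀ i, 0 < c i)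
    (d : ι → ℝ) :
    Tendsto (fun t => (∏ i, (c i * t + d i) ^ c i) / t ^ ∑ i, c i) atTop
      (𝓝 (∏ i, c i ^ c i)) := by
  have hlin (i : ι) : Tendsto (fun t => c i * t + d i) atTop atTop :=
    tendsto_atTop_add_const_right _ _ (tendsto_id.const_mul_atTop (hc i))
  have heq : ∀ᶠ t in atTop,
      ∏ i, (c i + d i / t) ^ c i = (∏ i, (c i * t + d i) ^ c i) / t ^ ∑ i, c i := by
    filter_upwards [eventually_gt_atTop 0,
      eventually_all.2 fun i => (hlin i).eventually_ge_atTop 0] with t ht hnonneg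
    rw [rpow_sum_of_pos ht, ← prod_div_distrib]
    refine prod_congr rfl fun i _ => ?_
    rw [← div_rpow (hnonneg i) ht.le]
    field_simp
  refine Tendsto.congr' heq (tendsto_finsetProd _ fun i _ => ?_)
  simpa using ((tendsto_const_nhds (x := c i)).add
    (tendsto_const_nhds.div_atTop tendsto_id)).rpow_const (Or.inr (hc i).le)

section Wright

variable {ι κ : Type*} [Fintype ι] [Fintype κ] (B β : ι → ℝ) (A α : κ → ℝ)

/-- The coefficients of the generalized Wright series `∑ wrightCoeff B β A α k * z ^ k / k!`. -/
noncomputable def wrightCoeff (k : ℕ) : ℝ :=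
  (∏ i, Gamma (B i + β i * k)) / ∏ j, Gamma (A j + α j * k)

variable {B β A α}

theorem wrightCoeff_succ_le {k : ℕ} (hβ : ∀ i, 0 ≤ β i) (hα : ∀ j, 0 ≤ α j)
    (hx : ∀ i, 0 < B i + β i * k) (hy : ∀ j, 1 < A j + α j * k) :
    wrightCoeff B β A α (k + 1) ≤ wrightCoeff B β A α k *
      ((∏ i, (B i + β i * (k + 1)) ^ β i) / ∏ j, (A j + α j * k - 1) ^ α j) := by
  have hshift (x c : ℝ) : x + c * (k + 1) = (x + c * k) + c := by ring
  have hnum : ∏ i, Gamma (B i + β i * (k + 1)) ≤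
      (∏ i, Gamma (B i + β i * k)) * ∏ i, (B i + β i * (k + 1)) ^ β i := by
    rw [← prod_mul_distrib]
    refine prod_le_prod (fun i _ => (Gamma_pos_of_pos ?_).le) fun i _ => ?_
    · linarith [hx i, hβ i, hshift (B i) (β i)]
    · simpa only [hshift] using Gamma_add_le_Gamma_mul_rpow (hx i) (hβ i)
  have hden : (∏ j, Gamma (A j + α j * k)) * ∏ j, (A j + α j * k - 1) ^ α j ≤
      ∏ j, Gamma (A j + α j * (k + 1)) := by
    rw [← prod_mul_distrib]
    refine prod_le_prod (fun j _ => mul_nonneg (Gamma_pos_of_pos ?_).le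
      (rpow_nonneg (by linarith [hy j]) _)) fun j _ => ?_
    · linarith [hy j]
    · simpa only [hshift] using Gamma_mul_rpow_le_Gamma_add (hy j) (hα j)
  have hden_pos : 0 < (∏ j, Gamma (A j + α j * k)) * ∏ j, (A j + α j * k - 1) ^ α j :=
    mul_pos (prod_pos fun j _ => Gamma_pos_of_pos (by linarith [hy j]))
      (prod_pos fun j _ => rpow_pos_of_pos (by linarith [hy j]) _)
  rw [wrightCoeff, wrightCoeff, ← mul_div_mul_comm, Nat.cast_succ]
  exact div_le_div₀ (mul_nonneg (prod_nonneg fun i _ => (Gamma_pos_of_pos (hx i)).le)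
    (prod_nonneg fun i _ => rpow_nonneg (by linarith [hx i, hβ i, hshift (B i) (β i)]) _))
    hnum hden_pos hden

theorem tendsto_wright_ratio_bound (hβ : ∀ i, 0 < β i) (hα : ∀ j, 0 < α j)
    (hσ : ∑ i, β i - ∑ j, α j < 1) (z : ℝ) :
    Tendsto (fun k : ℕ => |z| / (k + 1) *
      ((∏ i, (B i + β i * (k + 1)) ^ β i) / ∏ j, (A j + α j * k - 1) ^ α j)) atTop (𝓝 0) := by
  have hreal : Tendsto (fun t : ℝ => |z| * t ^ (-(1 - (∑ i, β i - ∑ j, α j))) *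
      (((∏ i, (β i * t + B i) ^ β i) / t ^ ∑ i, β i) /
        ((∏ j, (α j * t + (A j - α j - 1)) ^ α j) / t ^ ∑ j, α j))) atTop (𝓝 0) := by
    simpa using (tendsto_const_nhds.mul (tendsto_rpow_neg_atTop (sub_pos.2 hσ))).mul
      ((tendsto_prod_rpow_div_rpow_sum hβ B).div (tendsto_prod_rpow_div_rpow_sum hα _)
        (prod_pos fun j _ => rpow_pos_of_pos (hα j) _).ne')
  refine (hreal.comp (tendsto_atTop_add_const_right _ 1 tendsto_natCast_atTop_atTop)).congr
    fun k => ?_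
  have ht : (0 : ℝ) < k + 1 := by positivity
  have hN : ∏ i, (β i * (k + 1 : ℝ) + B i) ^ β i = ∏ i, (B i + β i * (k + 1)) ^ β i :=
    prod_congr rfl fun i _ => by ring_nf
  have hD : ∏ j, (α j * (k + 1 : ℝ) + (A j - α j - 1)) ^ α j =
      ∏ j, (A j + α j * k - 1) ^ α j :=
    prod_congr rfl fun j _ => by ring_nf
  simp only [Function.comp_apply, hN, hD, neg_sub, rpow_sub ht, rpow_one]
  field_simp

theorem summable_wrightCoeff_mul_pow_div_factorial (hβ : ∀ i, 0 < β i) (hα : ∀ j, 0 < α j)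
    (hσ : ∑ i, β i - ∑ j, α j < 1) (z : ℝ) :
    Summable fun k : ℕ => wrightCoeff B β A α k * z ^ k / k ! := by
  have harg {c : ℝ} (d : ℝ) (hc : 0 < c) : Tendsto (fun k : ℕ => d + c * k) atTop atTop :=
    tendsto_atTop_add_const_left _ _ (tendsto_natCast_atTop_atTop.const_mul_atTop hc)
  have hlarge : ∀ᶠ k : ℕ in atTop, (∀ i, 0 < B i + β i * k) ∧ ∀ j, 1 < A j + α j * k :=
    (eventually_all.2 fun i => (harg _ (hβ i)).eventually_gt_atTop 0).and
      (eventually_all.2 fun j => (harg _ (hα j)).eventually_gt_atTop 1)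
  have hpos : ∀ᶠ k : ℕ in atTop, 0 < wrightCoeff B β A α k := hlarge.mono fun k ⟨hx, hy⟩ =>
    div_pos (prod_pos fun i _ => Gamma_pos_of_pos (hx i))
      (prod_pos fun j _ => Gamma_pos_of_pos (by linarith [hy j]))
  have hnorm (n : ℕ) (hn : 0 < wrightCoeff B β A α n) :
      ‖wrightCoeff B β A α n * z ^ n / (n ! : ℝ)‖ = wrightCoeff B β A α n * |z| ^ n / n ! := by
    rw [norm_div, norm_mul, norm_pow, Real.norm_of_nonneg hn.le, Real.norm_natCast,
      Real.norm_eq_abs]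
  refine summable_of_ratio_norm_eventually_le (r := 1 / 2) (by norm_num) ?_
  filter_upwards [hlarge, hpos, tendsto_add_atTop_nat 1 hpos,
    (tendsto_wright_ratio_bound (B := B) (A := A) hβ hα hσ z).eventually_lt_const
      (by norm_num : (0 : ℝ) < 1 / 2)] with k ⟨hx, hy⟩ hk hk1 hρ
  rw [hnorm _ hk1, hnorm _ hk]
  set N := ∏ i, (B i + β i * (k + 1 : ℝ)) ^ β i
  set D := ∏ j, (A j + α j * k - 1) ^ α j
  calc wrightCoeff B β A α (k + 1) * |z| ^ (k + 1) / (k + 1)!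
      ≤ wrightCoeff B β A α k * (N / D) * |z| ^ (k + 1) / (k + 1)! := by
        gcongr
        exact wrightCoeff_succ_le (fun i => (hβ i).le) (fun j => (hα j).le) hx hy
    _ = |z| / (k + 1) * (N / D) * (wrightCoeff B β A α k * |z| ^ k / k !) := by
        rw [Nat.factorial_succ, Nat.cast_mul, pow_succ]
        push_cast
        field_simp
    _ ≤ 1 / 2 * (wrightCoeff B β A α k * |z| ^ k / k !) := by gcongr

end Wright

theorem integral_exp_mul_eq_tsum_moment {μ : Measure ℝ} (hnonneg : ∀ᵐ τ ∂μ, 0 ≤ τ)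
    (hint : ∀ k : ℕ, Integrable (fun τ => τ ^ k) μ) (z : ℝ)
    (hsum : Summable fun k : ℕ => |z| ^ k / k ! * ∫ τ, τ ^ k ∂μ) :
    ∫ τ, exp (z * τ) ∂μ = ∑' k : ℕ, z ^ k / k ! * ∫ τ, τ ^ k ∂μ := by
  have hterm (k : ℕ) : (fun τ => (z * τ) ^ k / k !) = fun τ => z ^ k / k ! * τ ^ k := by
    ext τ; ring
  have hnorm (k : ℕ) :
      ∫ τ, ‖(z * τ) ^ k / (k ! : ℝ)‖ ∂μ = |z| ^ k / k ! * ∫ τ, τ ^ k ∂μ := by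
    rw [← integral_const_mul]
    refine integral_congr_ae (hnonneg.mono fun τ hτ => ?_)
    simp only [norm_div, norm_pow, norm_mul, Real.norm_eq_abs, abs_of_nonneg hτ, Nat.abs_cast]
    ring
  calc ∫ τ, exp (z * τ) ∂μ = ∫ τ, ∑' k : ℕ, (z * τ) ^ k / k ! ∂μ := by
        simp_rw [exp_eq_exp_ℝ, NormedSpace.exp_eq_tsum_div]
    _ = ∑' k : ℕ, ∫ τ, (z * τ) ^ k / k ! ∂μ := by
        refine (integral_tsum_of_summable_integral_norm (fun k => ?_) ?_).symm
        · rw [hterm]; exact (hint k).const_mul _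
        · simpa only [hnorm] using hsum
    _ = ∑' k : ℕ, z ^ k / k ! * ∫ τ, τ ^ k ∂μ := by
        simp_rw [hterm, integral_const_mul]

theorem laplace_transform_eq_generalized_wright_general
    (m p : ℕ) (b β : Fin m → ℝ) (a α : Fin p → ℝ)
    (hβ : ∀ i, 0 < β i)
    (hα : ∀ j, 0 < α j)
    (hastar : (∑ i, β i) - (∑ j, α j) ∈ Set.Ioo (0 : ℝ) 1)
    (K : ℝ)
    (ν : Measure ℝ) (hsupp : ν (Set.Iic 0) = 0)
    (hint : ∀ k : ℕ, Integrable (fun τ : ℝ => τ ^ k) ν)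
    (hmom : ∀ k : ℕ, ∫ τ, τ ^ k ∂ν
      = (1 / K) * (∏ i, Real.Gamma (b i + β i * (k + 1)))
          / (∏ j, Real.Gamma (a j + α j * (k + 1))))
    (s : ℝ) :
    ∫ τ, Real.exp (-s * τ) ∂ν
      = (1 / K) * ∑' k : ℕ,
          ((∏ i, Real.Gamma (b i + β i + β i * k)) / (∏ j, Real.Gamma (a j + α j + α j * k)))
            * (-s) ^ k / (Nat.factorial k : ℝ) := by
  have hnonneg : ∀ᵐ τ ∂ν, 0 ≤ τ :=
    ae_iff.2 (measure_mono_null (fun τ hτ => (not_le.1 hτ).le) hsupp)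
  have hmoment (k : ℕ) : ∫ τ, τ ^ k ∂ν = 1 / K * wrightCoeff (b + β) β (a + α) α k := by
    have hshift (x c : ℝ) : x + c * (k + 1) = (x + c) + c * k := by ring
    simp only [hmom, wrightCoeff, Pi.add_apply, hshift, mul_div_assoc]
  have hsum := (summable_wrightCoeff_mul_pow_div_factorial (B := b + β) (A := a + α)
    hβ hα hastar.2 |s|).mul_left (1 / K)
  rw [integral_exp_mul_eq_tsum_moment hnonneg hint (-s)
    (hsum.congr fun k => by rw [hmoment, abs_neg]; ring), ← tsum_mul_left]
  refine tsum_congr fun k => ?_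
  rw [hmoment, wrightCoeff]
  simp only [Pi.add_apply]
  ring

/-- If a Borel probability measure on `(0,∞)` has Gamma-ratio moments, then its Laplace
transform is `(1/K)` times the generalized Wright function with shifted parameters
evaluated at `-s`. -/
theorem laplace_transform_eq_generalized_wright
    (m p : ℕ) (b β : Fin m → ℝ) (a α : Fin p → ℝ)
    (hβ : ∀ i, 0 < β i) (hbβ : ∀ i, 0 < b i + β i)
    (hα : ∀ j, 0 < α j) (haα : ∀ j, 0 < a j + α j)
    (hastar : (∑ i, β i) - (∑ j, α j) ∈ Set.Ioo (0 : ℝ) 1)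
    (K : ℝ) (hK : K = (∏ i, Real.Gamma (b i + β i)) / (∏ j, Real.Gamma (a j + α j)))
    (ν : Measure ℝ) [IsProbabilityMeasure ν] (hsupp : ν (Set.Iic 0) = 0)
    (hint : ∀ k : ℕ, Integrable (fun τ : ℝ => τ ^ k) ν)
    (hmom : ∀ k : ℕ, ∫ τ, τ ^ k ∂ν
      = (1 / K) * (∏ i, Real.Gamma (b i + β i * (k + 1)))
          / (∏ j, Real.Gamma (a j + α j * (k + 1))))
    (s : ℝ) (hs : 0 ≤ s) :
    ∫ τ, Real.exp (-s * τ) ∂ν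
      = (1 / K) * ∑' k : ℕ,
          ((∏ i, Real.Gamma (b i + β i + β i * k)) / (∏ j, Real.Gamma (a j + α j + α j * k)))
            * (-s) ^ k / (Nat.factorial k : ℝ) :=
  laplace_transform_eq_generalized_wright_general m p b β a α hβ hα hastar K ν hsupp hint hmom s
end

section
/- For every 𝐇 ∈ (0,1), the function s ↦ ((1+s)^{𝐇−1/2} − s^{𝐇−1/2})² is integrable on (0,∞); in particular the normalizing constant c_𝐇 = 1/(2𝐇) + ∫_0^∞ ((1+s)^{𝐇−1/2} − s^{𝐇−1/2})² ds appearing in the definition of K_𝐇 is finite and positive. -/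
/-! Write `a = H - 1/2 ∈ (-1/2, 1/2)`. On `(0, 1]` the integrand is at most
`2 ((1 + s)^a)^2 + 2 s^{2a}`, integrable because `2a > -1`. On `(1, ∞)` the mean value theorem
gives `|(1 + s)^a - s^a| ≤ |a| s^{a-1}`, so the integrand is `O(s^{2a-2})`, integrable because
`2a - 2 < -1`. Positivity of `c_H` then only needs `1/(2H) > 0`. -/

open MeasureTheory

/-- The normalizing constant `c_𝐇 = 1/(2𝐇) + ∫₀^∞ ((1+s)^{𝐇−1/2} − s^{𝐇−1/2})² ds`. -/
noncomputable def cH (H : ℝ) : ℝ :=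
  1 / (2 * H) + ∫ s in Set.Ioi (0 : ℝ), ((1 + s) ^ (H - 1 / 2) - s ^ (H - 1 / 2)) ^ 2

open Set Real

section

variable {a : ℝ}

lemma continuousOn_sq_one_add_rpow_sub_rpow :
    ContinuousOn (fun s : ℝ => ((1 + s) ^ a - s ^ a) ^ 2) (Ioi 0) := by
  refine (ContinuousOn.sub ?_ ?_).pow 2
  · exact (continuousOn_const.add continuousOn_id).rpow_const fun s hs =>
      Or.inl (show 1 + s ≠ 0 by linarith [mem_Ioi.1 hs])
  · exact continuousOn_id.rpow_const fun s hs => Or.inl hs.ne'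

lemma abs_one_add_rpow_sub_rpow_le (ha : a ≤ 1) {t : ℝ} (ht : 0 < t) :
    |(1 + t) ^ a - t ^ a| ≤ |a| * t ^ (a - 1) := by
  have hderiv : ∀ x ∈ Icc t (1 + t), HasDerivWithinAt (fun x : ℝ => x ^ a)
      (a * x ^ (a - 1)) (Icc t (1 + t)) x := fun x hx =>
    (hasDerivAt_rpow_const (Or.inl (ht.trans_le hx.1).ne')).hasDerivWithinAt
  have hbound : ∀ x ∈ Icc t (1 + t), ‖a * x ^ (a - 1)‖ ≤ |a| * t ^ (a - 1) := by
    intro x hx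
    have hx0 : 0 < x := ht.trans_le hx.1
    rw [norm_mul, norm_of_nonneg (rpow_nonneg hx0.le _), norm_eq_abs]
    exact mul_le_mul_of_nonneg_left (rpow_le_rpow_of_nonpos ht hx.1 (by linarith)) (abs_nonneg a)
  simpa using Convex.norm_image_sub_le_of_norm_hasDerivWithin_le hderiv hbound
    (convex_Icc _ _) (left_mem_Icc.2 (by linarith)) (right_mem_Icc.2 (by linarith))

lemma integrableOn_Ioi_one_sq_one_add_rpow_sub_rpow (ha : a < 1 / 2) :
    IntegrableOn (fun s : ℝ => ((1 + s) ^ a - s ^ a) ^ 2) (Ioi 1) := by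
  have hdom : IntegrableOn (fun s : ℝ => a ^ 2 * s ^ (2 * a - 2)) (Ioi 1) :=
    (integrableOn_Ioi_rpow_of_lt (by linarith) one_pos).const_mul _
  refine hdom.mono' (continuousOn_sq_one_add_rpow_sub_rpow.aestronglyMeasurable
    measurableSet_Ioi |>.mono_set (Ioi_subset_Ioi zero_le_one)) ?_
  filter_upwards [ae_restrict_mem measurableSet_Ioi] with t ht
  have ht0 : (0 : ℝ) < t := one_pos.trans ht
  calc ‖((1 + t) ^ a - t ^ a) ^ 2‖ = |(1 + t) ^ a - t ^ a| ^ 2 := by simp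
    _ ≤ (|a| * t ^ (a - 1)) ^ 2 := by
      gcongr; exact abs_one_add_rpow_sub_rpow_le (by linarith) ht0
    _ = a ^ 2 * t ^ (2 * a - 2) := by
      rw [mul_pow, sq_abs, ← rpow_mul_natCast ht0.le]; ring_nf

lemma integrableOn_Ioc_zero_one_sq_one_add_rpow_sub_rpow (ha : -1 / 2 < a) :
    IntegrableOn (fun s : ℝ => ((1 + s) ^ a - s ^ a) ^ 2) (Ioc 0 1) := by
  have hregular : IntegrableOn (fun s : ℝ => 2 * ((1 + s) ^ a) ^ 2) (Ioc 0 1) :=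
    ((((continuousOn_const.add continuousOn_id).rpow_const fun s hs =>
      Or.inl (show 1 + s ≠ 0 by linarith [hs.1])).pow 2).const_mul 2
      |>.integrableOn_Icc).mono_set Ioc_subset_Icc_self
  have hsingular : IntegrableOn (fun s : ℝ => 2 * s ^ (2 * a)) (Ioc 0 1) :=
    ((intervalIntegral.intervalIntegrable_rpow' (by linarith)).1).const_mul 2
  refine (hregular.add hsingular).mono' (continuousOn_sq_one_add_rpow_sub_rpow.aestronglyMeasurable
    measurableSet_Ioi |>.mono_set Ioc_subset_Ioi_self) ?_
  filter_upwards [ae_restrict_mem measurableSet_Ioc] with s hs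
  have hsq : s ^ (2 * a) = (s ^ a) ^ 2 := by rw [← rpow_mul_natCast hs.1.le]; ring_nf
  rw [norm_pow, norm_eq_abs, sq_abs, Pi.add_apply, hsq]
  linarith [sq_nonneg ((1 + s) ^ a + s ^ a)]

lemma integrableOn_Ioi_zero_sq_one_add_rpow_sub_rpow (ha₀ : -1 / 2 < a) (ha₁ : a < 1 / 2) :
    IntegrableOn (fun s : ℝ => ((1 + s) ^ a - s ^ a) ^ 2) (Ioi 0) := by
  rw [← Ioc_union_Ioi_eq_Ioi zero_le_one]
  exact (integrableOn_Ioc_zero_one_sq_one_add_rpow_sub_rpow ha₀).union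
    (integrableOn_Ioi_one_sq_one_add_rpow_sub_rpow ha₁)

end

/-- For every `𝐇 ∈ (0,1)`, the function `s ↦ ((1+s)^{𝐇−1/2} − s^{𝐇−1/2})²` is integrable
on `(0,∞)`; in particular the normalizing constant `c_𝐇` is finite and positive. -/
theorem cH_integrable_and_pos (H : ℝ) (hH : H ∈ Set.Ioo (0 : ℝ) 1) :
    IntegrableOn (fun s : ℝ => ((1 + s) ^ (H - 1 / 2) - s ^ (H - 1 / 2)) ^ 2)
      (Set.Ioi (0 : ℝ)) ∧ 0 < cH H := by
  obtain ⟨hH₀, hH₁⟩ := hH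
  refine ⟨integrableOn_Ioi_zero_sq_one_add_rpow_sub_rpow (by linarith) (by linarith), ?_⟩
  exact add_pos_of_pos_of_nonneg (by positivity)
    (setIntegral_nonneg measurableSet_Ioi fun s _ => sq_nonneg _)
end
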